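/- arXiv:1211.6054 — 5 statements merged into one kernel-verified Lean document; each statement's English description precedes it below -/
import Mathlib

section
/- Let S be a commutative ring and let H ⊆ R be subrings of S. Suppose H is a directed union of subrings D_α = B_α ∩ R_α (α ∈ A), where each B_α and R_α is a subring of S, R = ⋃_{α∈A} R_α, and for all α, β ∈ A, whenever D_α ⊆ D_β then R_α ⊆ R_β. Then there exists an ultrafilter U on A such that H = { r ∈ R : {α ∈ A : r ∈ B_α} ∈ U } (equivalently, identifying subrings of S with their diagonal images in the ultraproduct ∏_U S, one has H = (∏_U B_α) ∩ R). -/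
/-- Let `S` be a commutative ring and `H ⊆ R` subrings of `S`.  Suppose `H` is a
directed union of subrings `D_α = B_α ∩ R_α` (`α ∈ A`), where each `B_α` and `R_α` is a subring
of `S`, `R = ⋃_α R_α`, and whenever `D_α ⊆ D_β` then `R_α ⊆ R_β`.  Then there is an ultrafilter
`U` on `A` with `H = { r ∈ R : {α : r ∈ B_α} ∈ U }`, i.e. `H = (∏_U B_α) ∩ R`. -/
theorem statement0 (S : Type*) [CommRing S] (H R : Subring S) (hHR : H ≤ R)
    (A : Type*) (B Rf : A → Subring S)
    (hdir : ∀ α β : A, ∃ γ : A, B α ⊓ Rf α ≤ B γ ⊓ Rf γ ∧ B β ⊓ Rf β ≤ B γ ⊓ Rf γ)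
    (hH : (H : Set S) = ⋃ α : A, ((B α ⊓ Rf α : Subring S) : Set S))
    (hR : (R : Set S) = ⋃ α : A, ((Rf α : Subring S) : Set S))
    (hmono : ∀ α β : A, B α ⊓ Rf α ≤ B β ⊓ Rf β → Rf α ≤ Rf β) :
    ∃ U : Ultrafilter A, (H : Set S) = {r : S | r ∈ R ∧ {α : A | r ∈ B α} ∈ U} := by
  classical
  -- A is nonempty since 0 ∈ H = ⋃ D_α
  have h0 : (0 : S) ∈ (H : Set S) := H.zero_mem
  rw [hH] at h0
  obtain ⟨α0, hα0⟩ := Set.mem_iUnion.1 h0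
  haveI : Nonempty A := ⟨α0⟩
  set T : A → Set A := fun α => {β | B α ⊓ Rf α ≤ B β ⊓ Rf β} with hT
  have hTself : ∀ α, α ∈ T α := fun α => le_refl (B α ⊓ Rf α)
  have hdirF : Directed (· ≥ ·) (fun α => Filter.principal (T α)) := by
    intro α β
    obtain ⟨γ, h1, h2⟩ := hdir α β
    exact ⟨γ, Filter.principal_mono.2 (fun δ hδ => h1.trans hδ),
      Filter.principal_mono.2 (fun δ hδ => h2.trans hδ)⟩
  haveI hne : (⨅ α, Filter.principal (T α)).NeBot :=
    Filter.iInf_neBot_of_directed hdirF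
      (fun α => Filter.principal_neBot_iff.2 ⟨α, hTself α⟩)
  refine ⟨Ultrafilter.of (⨅ α, Filter.principal (T α)), ?_⟩
  set U := Ultrafilter.of (⨅ α, Filter.principal (T α)) with hUdef
  have hU : ∀ α, T α ∈ U := fun α =>
    Ultrafilter.of_le _ (Filter.mem_iInf_of_mem α (Filter.mem_principal_self _))
  ext r
  constructor
  · intro hr
    have hrU : r ∈ ⋃ α : A, ((B α ⊓ Rf α : Subring S) : Set S) := hH ▸ hr
    obtain ⟨α, hα⟩ := Set.mem_iUnion.1 hrU
    refine ⟨hHR hr, ?_⟩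
    exact Filter.mem_of_superset (hU α)
      (fun β hβ => (Subring.mem_inf.1 (hβ hα)).1)
  · rintro ⟨hrR, hrB⟩
    have hrR' : r ∈ ⋃ α : A, ((Rf α : Subring S) : Set S) := hR ▸ hrR
    obtain ⟨α1, hα1⟩ := Set.mem_iUnion.1 hrR'
    have hRfU : {β : A | r ∈ Rf β} ∈ U :=
      Filter.mem_of_superset (hU α1) (fun β hβ => hmono α1 β hβ hα1)
    have hBoth : ({α : A | r ∈ B α} ∩ {β : A | r ∈ Rf β}).Nonempty :=
      Filter.nonempty_of_mem (Filter.inter_mem hrB hRfU)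
    obtain ⟨β, hβB, hβR⟩ := hBoth
    rw [hH]
    exact Set.mem_iUnion.2 ⟨β, Subring.mem_inf.2 ⟨hβB, hβR⟩⟩
end

section
/- Let D ⊆ H ⊆ R be integral domains such that R is a proper overring of D (D ⊊ R and R is contained in the quotient field of D) and H is integrally closed, and let n be a positive integer. If H is a directed union of overrings A_α of D such that each A_α is an essentially n-valuated subring of R, then H is an essentially n-valuated subring of R. -/
/-!
Choose an ultrafilter `U` on the index set containing every tail `{α | A β ≤ A α}`. For a prime `P`
of `H̄` and each `α`, take valuation rings `V α i` for the contraction of `P` to `Ā_α`, and let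
`W i` consist of the `x` lying in `V α i` for `U`-almost all `α`. Divisibility being total in
each `V α i`, and `U` being an ultrafilter, it is total in `W i`. Since `H̄` is the directed union
of the `Ā_α`, a fraction `r / s` with `r, s ∈ H̄` lives in almost all `Ā_α`, and the equality
`H̄_P = ⋂ W i ∩ R_P` follows from the equalities at the level of the `Ā_α`.
-/

namespace ArticleOT

variable {K : Type*} [Field K]

/-- The localization of `R` at the multiplicative set `A \ P`, as a subset of the field `K`. -/
def locSet (A : Subring K) (P : Ideal A) (R : Subring K) : Set K :=
  {x : K | ∃ r ∈ R, ∃ s : A, s ∉ P ∧ x * (s : K) = r}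

/-- The localization `A_P` of a subring `A` of `K` at a prime ideal `P`, as a subring of `K`. -/
def locSubring (A : Subring K) (P : Ideal A) (hP : P.IsPrime) : Subring K where
  carrier := locSet A P A
  zero_mem' := ⟨0, zero_mem A, 1, fun h => hP.ne_top ((Ideal.eq_top_iff_one P).2 h), by simp⟩
  one_mem' := ⟨1, one_mem A, 1, fun h => hP.ne_top ((Ideal.eq_top_iff_one P).2 h), by simp⟩
  add_mem' := by
    rintro x y ⟨r₁, hr₁, s₁, hs₁, e₁⟩ ⟨r₂, hr₂, s₂, hs₂, e₂⟩
    refine ⟨r₁ * (s₂ : K) + r₂ * (s₁ : K),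
      add_mem (mul_mem hr₁ s₂.2) (mul_mem hr₂ s₁.2), s₁ * s₂,
      fun h => ((hP.mem_or_mem h).elim hs₁ hs₂), ?_⟩
    push_cast
    calc (x + y) * ((s₁ : K) * (s₂ : K)) = (x * s₁) * s₂ + (y * s₂) * s₁ := by ring
    _ = r₁ * s₂ + r₂ * s₁ := by rw [e₁, e₂]
  mul_mem' := by
    rintro x y ⟨r₁, hr₁, s₁, hs₁, e₁⟩ ⟨r₂, hr₂, s₂, hs₂, e₂⟩
    refine ⟨r₁ * r₂, mul_mem hr₁ hr₂, s₁ * s₂,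
      fun h => ((hP.mem_or_mem h).elim hs₁ hs₂), ?_⟩
    push_cast
    calc (x * y) * ((s₁ : K) * (s₂ : K)) = (x * s₁) * (y * s₂) := by ring
    _ = r₁ * r₂ := by rw [e₁, e₂]
  neg_mem' := by
    rintro x ⟨r, hr, s, hs, e⟩
    exact ⟨-r, neg_mem hr, s, hs, by rw [neg_mul, e]⟩

lemma mem_locSubring {A : Subring K} {P : Ideal A} {hP : P.IsPrime} {x : K} :
    x ∈ locSubring A P hP ↔ x ∈ locSet A P A := Iff.rfl

/-- The integral closure of a subring `H` of `K` in `K`, as a subring of `K`.  When `K` is the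
quotient field of `H` this is the integral closure `H̄` of `H`. -/
noncomputable def intClosure (H : Subring K) : Subring K := (integralClosure H K).toSubring

lemma mem_intClosure_of_mem {H : Subring K} {x : K} (hx : x ∈ H) : x ∈ intClosure H := by
  have : IsIntegral (↥H) x := by
    refine ⟨Polynomial.X - Polynomial.C ⟨x, hx⟩, Polynomial.monic_X_sub_C _, ?_⟩
    simp only [Polynomial.eval₂_sub, Polynomial.eval₂_X, Polynomial.eval₂_C]
    exact sub_eq_zero_of_eq rfl
  exact this

/-- `H` is an essentially `n`-valuated subring of `R` (both subrings of the field `K`, which is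
the common quotient field): for each prime ideal `P` of the integral closure `H̄` of `H` there
are `n` (not necessarily distinct) valuation overrings `V i` of `H` with
`H̄_P = V 1 ∩ ⋯ ∩ V n ∩ R_P`. -/
noncomputable def EssNVal (H R : Subring K) (n : ℕ) : Prop :=
  ∀ P : Ideal (intClosure H), P.IsPrime →
    ∃ V : Fin n → Subring K,
      (∀ i, H ≤ V i ∧ ValuationRing (V i)) ∧
      locSet (intClosure H) P (intClosure H) =
        (⋂ i, (V i : Set K)) ∩ locSet (intClosure H) P R

/-- A prime ideal of height one: a nonzero prime all of whose strictly smaller primes are zero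
(in a domain this says precisely that the height is one). -/
def HeightOne {A : Type*} [CommRing A] (Q : Ideal A) : Prop :=
  Q.IsPrime ∧ Q ≠ ⊥ ∧ ∀ Q' : Ideal A, Q'.IsPrime → Q' < Q → Q' = ⊥

/-- `V` is a hidden prime divisor of the local domain `D` (mapped into the field `K`, its
quotient field, by `φ`): `V` is a DVR overring of `D` that dominates `D` (every nonunit of `D`
maps to a nonunit of `V`, i.e. `m_D ⊆ m_V`) and whose residue field `V/m_V` (here `m_V` is the
Jacobson radical, which is the maximal ideal since `V` is local) has transcendence degree
`d - 1` over (the isomorphic image of) the residue field of `D`, where `d = dim D`. -/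
noncomputable def IsHiddenPrimeDivisor {D : Type*} [CommRing D] (φ : D →+* K) (V : Subring K)
    (hV : ∀ r, φ r ∈ V) : Prop :=
  IsDiscreteValuationRing V ∧
  (∀ r : D, ¬ IsUnit r → ¬ IsUnit (φ.codRestrict V hV r)) ∧
  (∃ d : ℕ, ringKrullDim D = (d : ℕ) ∧
    ∃ b : Fin (d - 1) → (↥V ⧸ (⊥ : Ideal V).jacobson),
      IsTranscendenceBasis
        (((Ideal.Quotient.mk ((⊥ : Ideal V).jacobson)).comp (φ.codRestrict V hV)).range) b)

lemma phi_mem_locSubring {D : Type*} [CommRing D] (φ : D →+* K) {H : Subring K}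
    (hDH : ∀ r, φ r ∈ H) {P : Ideal H} (hP : P.IsPrime) (r : D) :
    φ r ∈ locSubring H P hP :=
  ⟨φ r, hDH r, 1, fun h => hP.ne_top ((Ideal.eq_top_iff_one P).2 h), by simp⟩

/-- `Q` is an exceptional prime ideal of the extension `H/D`: `Q` is a height one prime of `H`
such that the localization `H_Q` is a hidden prime divisor of `D`. -/
noncomputable def IsExceptionalPrime {D : Type*} [CommRing D] (φ : D →+* K) (H : Subring K)
    (hDH : ∀ r, φ r ∈ H) (Q : Ideal H) : Prop :=
  ∃ hQ : Q.IsPrime, HeightOne Q ∧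
    IsHiddenPrimeDivisor φ (locSubring H Q hQ) (phi_mem_locSubring φ hDH hQ)

/-- The extension `H/D` is essentially `n`-fibered: for each prime ideal `P` of `H`, the
extension `H_P/D` has at most `n` exceptional prime ideals. -/
noncomputable def EssNFibered {D : Type*} [CommRing D] (φ : D →+* K) (H : Subring K)
    (hDH : ∀ r, φ r ∈ H) (n : ℕ) : Prop :=
  ∀ (P : Ideal H) (hP : P.IsPrime),
    {Q : Ideal (locSubring H P hP) |
        IsExceptionalPrime φ (locSubring H P hP) (phi_mem_locSubring φ hDH hP) Q}.Finite ∧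
    {Q : Ideal (locSubring H P hP) |
        IsExceptionalPrime φ (locSubring H P hP) (phi_mem_locSubring φ hDH hP) Q}.ncard ≤ n

/-- The overring `D[1/f]` of (the image under `φ` of) `D`, as a subring of the field `K`. -/
noncomputable def awayS {D : Type*} [CommRing D] (φ : D →+* K) (f : D) : Subring K :=
  Subring.closure (Set.range φ ∪ {(φ f)⁻¹})

lemma phi_mem_awayS {D : Type*} [CommRing D] (φ : D →+* K) (f : D) (r : D) :
    φ r ∈ awayS φ f :=
  Subring.subset_closure (Or.inl ⟨r, rfl⟩)

/-- The localization of `R` at (the image of) the multiplicative set `S ⊆ D₀`, as a subring of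
the field `K`; `hR` says that `φ` maps `D₀` into `R`. -/
def subLoc {D₀ : Type*} [CommRing D₀] (φ : D₀ →+* K) (S : Submonoid D₀) (R : Subring K)
    (hR : ∀ d, φ d ∈ R) : Subring K where
  carrier := {x : K | ∃ r ∈ R, ∃ s ∈ S, x * φ s = r}
  zero_mem' := ⟨0, zero_mem R, 1, S.one_mem, by simp⟩
  one_mem' := ⟨φ 1, hR 1, 1, S.one_mem, by simp⟩
  add_mem' := by
    rintro x y ⟨r₁, hr₁, s₁, hs₁, e₁⟩ ⟨r₂, hr₂, s₂, hs₂, e₂⟩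
    refine ⟨r₁ * φ s₂ + r₂ * φ s₁, add_mem (mul_mem hr₁ (hR s₂)) (mul_mem hr₂ (hR s₁)),
      s₁ * s₂, S.mul_mem hs₁ hs₂, ?_⟩
    rw [map_mul]
    calc (x + y) * (φ s₁ * φ s₂) = (x * φ s₁) * φ s₂ + (y * φ s₂) * φ s₁ := by ring
    _ = r₁ * φ s₂ + r₂ * φ s₁ := by rw [e₁, e₂]
  mul_mem' := by
    rintro x y ⟨r₁, hr₁, s₁, hs₁, e₁⟩ ⟨r₂, hr₂, s₂, hs₂, e₂⟩
    refine ⟨r₁ * r₂, mul_mem hr₁ hr₂, s₁ * s₂, S.mul_mem hs₁ hs₂, ?_⟩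
    rw [map_mul]
    calc (x * y) * (φ s₁ * φ s₂) = (x * φ s₁) * (y * φ s₂) := by ring
    _ = r₁ * r₂ := by rw [e₁, e₂]
  neg_mem' := by
    rintro x ⟨r, hr, s, hs, e⟩
    exact ⟨-r, neg_mem hr, s, hs, by rw [neg_mul, e]⟩

lemma intClosure_mono {A B : Subring K} (h : A ≤ B) : intClosure A ≤ intClosure B :=
  fun _ hx => IsIntegral.map_of_comp_eq (Subring.inclusion h) (RingHom.id K) rfl hx

lemma valuationRing_iff_div_mem (S : Subring K) :
    ValuationRing S ↔ ∀ a ∈ S, ∀ b ∈ S, b / a ∈ S ∨ a / b ∈ S := by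
  constructor
  · intro _ a ha b hb
    obtain ⟨c, hc | hc⟩ := ValuationRing.cond (⟨a, ha⟩ : S) ⟨b, hb⟩
    · by_cases ha0 : a = 0
      · simp [ha0]
      · left
        rw [← show a * c = b from congrArg Subtype.val hc, mul_div_cancel_left₀ _ ha0]
        exact c.2
    · by_cases hb0 : b = 0
      · simp [hb0]
      · right
        rw [← show b * c = a from congrArg Subtype.val hc, mul_div_cancel_left₀ _ hb0]
        exact c.2
  · refine fun h => { cond' := fun a b => ?_ }
    by_cases ha0 : (a : K) = 0
    · exact ⟨0, Or.inr (Subtype.ext (by simp [ha0]))⟩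
    by_cases hb0 : (b : K) = 0
    · exact ⟨0, Or.inl (Subtype.ext (by simp [hb0]))⟩
    rcases h a a.2 b b.2 with hba | hab
    · exact ⟨⟨_, hba⟩, Or.inl (Subtype.ext (mul_div_cancel₀ _ ha0))⟩
    · exact ⟨⟨_, hab⟩, Or.inr (Subtype.ext (mul_div_cancel₀ _ hb0))⟩

lemma locSet_comap_subset {A B : Subring K} (h : A ≤ B) (Q : Ideal B) {R R' : Subring K}
    (hR : R ≤ R') : locSet A (Q.comap (Subring.inclusion h)) R ⊆ locSet B Q R' :=
  fun _ ⟨r, hr, s, hs, e⟩ => ⟨r, hR hr, Subring.inclusion h s, hs, e⟩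

section Directed

variable {ι : Type*}

def liminfSubring (l : Filter ι) (S : ι → Subring K) : Subring K where
  carrier := {x | ∀ᶠ i in l, x ∈ S i}
  zero_mem' := Filter.Eventually.of_forall fun i => zero_mem (S i)
  one_mem' := Filter.Eventually.of_forall fun i => one_mem (S i)
  add_mem' hx hy := hx.mp (hy.mono fun _ hy hx => add_mem hx hy)
  mul_mem' hx hy := hx.mp (hy.mono fun _ hy hx => mul_mem hx hy)
  neg_mem' hx := hx.mono fun _ hx => neg_mem hx

lemma valuationRing_liminfSubring (U : Ultrafilter ι) {S : ι → Subring K}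
    (hS : ∀ i, ValuationRing (S i)) : ValuationRing (liminfSubring U S) := by
  simp_rw [valuationRing_iff_div_mem] at hS ⊢
  intro a ha b hb
  exact U.eventually_or.mp (ha.mp (hb.mono fun i hb ha => hS i a ha b hb))

lemma exists_ultrafilter_eventually_le {α : Type*} [Preorder α] [Nonempty ι] {f : ι → α}
    (hf : Directed (· ≤ ·) f) : ∃ U : Ultrafilter ι, ∀ j, ∀ᶠ i in U, f j ≤ f i := by
  have hdir : Directed (· ≥ ·) fun j => Filter.principal {i | f j ≤ f i} := fun j k => by
    obtain ⟨m, hjm, hkm⟩ := hf j k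
    exact ⟨m, Filter.principal_mono.mpr fun i hi => hjm.trans hi,
      Filter.principal_mono.mpr fun i hi => hkm.trans hi⟩
  have := Filter.iInf_neBot_of_directed' hdir fun j =>
    Filter.principal_neBot_iff.mpr ⟨j, le_refl (f j)⟩
  exact ⟨Ultrafilter.of _, fun j => Ultrafilter.of_le _
    (Filter.mem_iInf_of_mem j (Filter.mem_principal_self _))⟩

/-- Integrality over a directed union is witnessed over one member, since a monic equation has
finitely many coefficients. -/
lemma mem_intClosure_iSup_of_directed [Nonempty ι] {A : ι → Subring K}
    (hA : Directed (· ≤ ·) A) {x : K} :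
    x ∈ intClosure (⨆ α, A α) ↔ ∃ α, x ∈ intClosure (A α) := by
  refine ⟨fun hx => ?_, fun ⟨α, hx⟩ => intClosure_mono (le_iSup A α) hx⟩
  obtain ⟨s, hs, hxs⟩ := isIntegral_iff_isIntegral_closure_finite.mp (hx : IsIntegral _ x)
  obtain ⟨γ, hγ⟩ := hA.exists_mem_subset_of_finset_subset_biUnion (f := fun α => (A α : Set K))
    (s := (hs.image Subtype.val).toFinset) (by
      rintro _ hy
      obtain ⟨y, -, rfl⟩ := (hs.image Subtype.val).mem_toFinset.mp hy
      exact Set.mem_iUnion.mpr ((Subring.mem_iSup_of_directed hA).mp y.2))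
  have hle : Subring.closure s ≤ (A γ).comap (⨆ α, A α).subtype :=
    Subring.closure_le.mpr fun y hy => hγ ((hs.image Subtype.val).mem_toFinset.mpr ⟨y, hy, rfl⟩)
  exact ⟨γ, hxs.map_of_comp_eq
    (((⨆ α, A α).subtype.comp (Subring.closure s).subtype).codRestrict (A γ) fun y => hle y.2)
    (RingHom.id K) rfl⟩

theorem essNVal_iSup_of_directed [Nonempty ι] {A : ι → Subring K} {R : Subring K}
    {n : ℕ} (hA : Directed (· ≤ ·) A) (hval : ∀ α, EssNVal (A α) R n) :
    EssNVal (⨆ α, A α) R n := by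
  intro P hP
  have hle (α : ι) : intClosure (A α) ≤ intClosure (⨆ α, A α) := intClosure_mono (le_iSup A α)
  choose V hV hloc using fun α => hval α (P.comap (Subring.inclusion (hle α))) (hP.comap _)
  obtain ⟨U, hU⟩ := exists_ultrafilter_eventually_le hA
  refine ⟨fun i => liminfSubring U (V · i),
    fun i => ⟨fun x hx => ?_, valuationRing_liminfSubring U fun α => (hV α i).2⟩, ?_⟩
  · obtain ⟨β, hβ⟩ := (Subring.mem_iSup_of_directed hA).mp hx
    exact (hU β).mono fun α hα => (hV α i).1 (hα hβ)
  apply Set.Subset.antisymm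
  · rintro x ⟨r, hr, s, hs, e⟩
    obtain ⟨β₁, hr₁⟩ := (mem_intClosure_iSup_of_directed hA).mp hr
    obtain ⟨β₂, hs₂⟩ := (mem_intClosure_iSup_of_directed hA).mp s.2
    have hx : ∀ᶠ α in U, x ∈ (⋂ i, (V α i : Set K)) ∩
        locSet (intClosure (A α)) (P.comap (Subring.inclusion (hle α))) R :=
      ((hU β₁).and (hU β₂)).mono fun α ⟨h₁, h₂⟩ => hloc α ▸
        ⟨r, intClosure_mono h₁ hr₁, ⟨s, intClosure_mono h₂ hs₂⟩, hs, e⟩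
    obtain ⟨α, -, hxα⟩ := hx.exists
    exact ⟨Set.mem_iInter.mpr fun i => hx.mono fun α h => Set.mem_iInter.mp h.1 i,
      locSet_comap_subset _ _ le_rfl hxα⟩
  · rintro x ⟨hxW, r, hr, s, hs, e⟩
    obtain ⟨β, hsβ⟩ := (mem_intClosure_iSup_of_directed hA).mp s.2
    have hxV : ∀ᶠ α in U, ∀ i, x ∈ V α i := Filter.eventually_all.mpr (Set.mem_iInter.mp hxW)
    obtain ⟨α, hβα, hxα⟩ := ((hU β).and hxV).exists
    have hx : x ∈ locSet (intClosure (A α)) (P.comap (Subring.inclusion (hle α)))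
        (intClosure (A α)) := by
      rw [hloc α]
      exact ⟨Set.mem_iInter.mpr hxα, r, hr, ⟨s, intClosure_mono hβα hsβ⟩, hs, e⟩
    exact locSet_comap_subset _ _ (hle α) hx

end Directed

theorem statement1_general {K : Type*} [Field K] (H R : Subring K)
    (n : ℕ)
    (ι : Type*) (A : ι → Subring K)
    (hdir : ∀ α β : ι, ∃ γ : ι, A α ≤ A γ ∧ A β ≤ A γ)
    (hunion : (H : Set K) = ⋃ α : ι, ((A α : Subring K) : Set K))
    (hval : ∀ α, EssNVal (A α) R n) :
    EssNVal H R n := by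
  have : Nonempty ι := by
    obtain ⟨α, -⟩ := Set.mem_iUnion.mp (hunion ▸ zero_mem H : (0 : K) ∈ ⋃ α, (A α : Set K))
    exact ⟨α⟩
  obtain rfl : H = ⨆ α, A α :=
    SetLike.coe_injective (hunion.trans (Subring.coe_iSup_of_directed hdir).symm)
  exact essNVal_iSup_of_directed hdir hval

/-- Let `D ⊆ H ⊆ R` be domains (subrings of the quotient field `K` of `D`) with
`R` a proper overring of `D` and `H` integrally closed, and let `n` be a positive integer.  If
`H` is a directed union of overrings `A_α` of `D` each of which is an essentially `n`-valuated
subring of `R`, then `H` is an essentially `n`-valuated subring of `R`. -/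
theorem statement1 {K : Type*} [Field K] (D H R : Subring K)
    (hquot : ∀ x : K, ∃ a ∈ D, ∃ b ∈ D, b ≠ 0 ∧ x * b = a)
    (hDH : D ≤ H) (hHR : H ≤ R) (hDR : D ≠ R)
    (hic : IsIntegrallyClosed H)
    (n : ℕ) (hn : 0 < n)
    (ι : Type*) (A : ι → Subring K)
    (hDA : ∀ α, D ≤ A α)
    (hdir : ∀ α β : ι, ∃ γ : ι, A α ≤ A γ ∧ A β ≤ A γ)
    (hunion : (H : Set K) = ⋃ α : ι, ((A α : Subring K) : Set K))
    (hval : ∀ α, EssNVal (A α) R n) :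
    EssNVal H R n :=
  statement1_general H R n ι A hdir hunion hval

end ArticleOT
end

section
/- Let D ⊆ H ⊆ R be integral domains with R a proper overring of D (D ⊊ R and R contained in the quotient field of D) and H integrally closed. Suppose there exist prime ideals P_1,…,P_t of H with t > 0 such that H = H_{P_1} ∩ ⋯ ∩ H_{P_t} ∩ R, each localization H_{P_i} is a discrete valuation ring, and no H_{P_i} can be omitted from this intersection. Let n be a positive integer. If t ≤ n, then H is an essentially n-valuated subring of R. If n < t, then: (1) H is an essentially n-valuated subring of R if and only if P_{i_1} + P_{i_2} + ⋯ + P_{i_{n+1}} = H whenever i_1, i_2, …, i_{n+1} are distinct members of {1,…,t}; and (2) H is an essentially one-valuated subring of R if and only if the prime ideals P_1,…,P_t are pairwise comaximal. -/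
namespace ArticleOT

variable {K : Type*} [Field K]

/-!
Localizing `H = H_{P 1} ∩ ⋯ ∩ H_{P t} ∩ R` at a prime `Q` of `H = H̄` leaves
`H_Q = ⋂_{P i ≤ Q} H_{P i} ∩ R_Q`: for `P i ⊄ Q`, a power of some `u ∈ P i \ Q` clears the
denominators of `H_{P i}`. Padding with `K`, `H` is essentially `m`-valuated as soon as at most
`m` of the `P i` lie in each prime. Conversely, if `H_Q = V 1 ∩ ⋯ ∩ V m ∩ R_Q` and `P i ≤ Q`, some
`V j` lies in `H_{P i}`, because a DVR has no overrings besides itself and `K` while irredundancy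
gives `R ⊄ H_{P i}`. A valuation ring lies in at most one of the distinct DVRs `H_{P i}`, as its
overrings form a chain, so at most `m` of the `P i` lie in `Q`. Finally, at most `m` of the `P i`
lie in each prime exactly when any `m + 1` of them sum to `H`.
-/

section Valuation

variable {A B V : Subring K}

theorem isFractionRing_of_forall_exists_mul_eq {D : Subring K}
    (hD : ∀ x : K, ∃ a ∈ D, ∃ b ∈ D, b ≠ 0 ∧ x * b = a) (hDB : D ≤ B) :
    IsFractionRing B K :=
  IsFractionRing.of_field _ _ fun z => by
    obtain ⟨a, ha, b, hb, hb0, e⟩ := hD z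
    exact ⟨⟨a, hDB ha⟩, ⟨b, hDB hb⟩, (eq_div_of_mul_eq hb0 e)⟩

theorem isFractionRing_of_le [IsFractionRing A K] (hAB : A ≤ B) : IsFractionRing B K :=
  isFractionRing_of_forall_exists_mul_eq (fun x => by
    obtain ⟨a, b, hb, rfl⟩ := IsFractionRing.div_surjective A x
    have hb0 : (b : K) ≠ 0 := by simpa using nonZeroDivisors.ne_zero hb
    exact ⟨a, a.2, b, b.2, hb0, div_mul_cancel₀ _ hb0⟩) hAB

theorem mem_or_inv_mem [ValuationRing V] [IsFractionRing V K] (x : K) : x ∈ V ∨ x⁻¹ ∈ V := by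
  rcases ValuationRing.isInteger_or_isInteger V x with ⟨y, hy⟩ | ⟨y, hy⟩
  · exact Or.inl (hy ▸ y.2)
  · exact Or.inr (hy ▸ y.2)

theorem valuationRing_top : ValuationRing (⊤ : Subring K) :=
  Function.Surjective.valuationRing (Subring.topEquiv.symm : K ≃+* (⊤ : Subring K)).toRingHom
    Subring.topEquiv.symm.surjective

theorem le_total_of_valuationRing_le [ValuationRing V] [IsFractionRing V K] (hA : V ≤ A)
    (hB : V ≤ B) : A ≤ B ∨ B ≤ A := by
  by_contra! h
  obtain ⟨⟨x, hxA, hxB⟩, ⟨y, hyB, hyA⟩⟩ :=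
    And.intro (SetLike.not_le_iff_exists.1 h.1) (SetLike.not_le_iff_exists.1 h.2)
  have hx0 : x ≠ 0 := by rintro rfl; exact hxB (zero_mem B)
  have hy0 : y ≠ 0 := by rintro rfl; exact hyA (zero_mem A)
  rcases mem_or_inv_mem (V := V) (x / y) with hxy | hxy
  · exact hxB (by simpa [hy0] using mul_mem (hB hxy) hyB)
  · exact hyA (by simpa [hx0] using mul_mem (hA hxy) hxA)

theorem exists_dvd_pow_of_not_isUnit {R : Type*} [CommRing R] [IsDomain R]
    [IsDiscreteValuationRing R] {b u : R} (hb : b ≠ 0) (hu : ¬IsUnit u) :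
    ∃ k : ℕ, b ∣ u ^ k := by
  obtain ⟨ϖ, hϖ⟩ := IsDiscreteValuationRing.exists_irreducible R
  obtain ⟨k, hk⟩ := IsDiscreteValuationRing.associated_pow_irreducible hb hϖ
  have hϖu : ϖ ∣ u := by
    rwa [← Ideal.mem_span_singleton, ← hϖ.maximalIdeal_eq, IsLocalRing.mem_maximalIdeal,
      mem_nonunits_iff]
  exact ⟨k, hk.dvd.trans (pow_dvd_pow_of_dvd hϖu k)⟩

variable [IsDiscreteValuationRing A]

theorem ne_top_of_isDiscreteValuationRing : A ≠ ⊤ := by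
  intro hA
  obtain ⟨ϖ, hϖ⟩ := IsDiscreteValuationRing.exists_irreducible A
  have hϖ0 : (ϖ : K) ≠ 0 := by simpa using hϖ.ne_zero
  have hinv : (ϖ : K)⁻¹ ∈ A := (SetLike.ext_iff.1 hA _).2 (Subring.mem_top _)
  exact hϖ.not_isUnit (IsUnit.of_mul_eq_one ⟨_, hinv⟩ (Subtype.ext (mul_inv_cancel₀ hϖ0)))

variable [IsFractionRing A K]

theorem exists_mul_pow_mem {u : K} (hu : u ∈ A) (hu' : u⁻¹ ∉ A) (x : K) :
    ∃ k : ℕ, x * u ^ k ∈ A := by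
  obtain ⟨a, b, hb, rfl⟩ := IsFractionRing.div_surjective A x
  have hnu : ¬IsUnit (⟨u, hu⟩ : A) := fun h => by
    obtain ⟨w, hw⟩ := h.exists_left_inv
    exact hu' (eq_inv_of_mul_eq_one_left (congrArg Subtype.val hw) ▸ w.2)
  obtain ⟨k, c, hc⟩ := exists_dvd_pow_of_not_isUnit (nonZeroDivisors.ne_zero hb) hnu
  have hb0 : (b : K) ≠ 0 := by simpa using nonZeroDivisors.ne_zero hb
  have huk : u ^ k = b * c := congrArg Subtype.val hc
  refine ⟨k, ?_⟩
  have : (a : K) / b * u ^ k = a * c := by rw [huk]; field_simp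
  exact this ▸ mul_mem a.2 c.2

theorem exists_eq_mul_pow_of_not_mem {v : K} (hv : v ∉ A) (y : K) :
    ∃ a ∈ A, ∃ k : ℕ, y = a * v ^ k := by
  have hv0 : v ≠ 0 := by rintro rfl; exact hv (zero_mem A)
  have hv' : v⁻¹ ∈ A := (mem_or_inv_mem v).resolve_left hv
  obtain ⟨k, hk⟩ := exists_mul_pow_mem hv' (by rwa [inv_inv]) y
  exact ⟨_, hk, k, by rw [mul_assoc, ← mul_pow, inv_mul_cancel₀ hv0, one_pow, mul_one]⟩

theorem le_of_le_of_ne_top (hAB : A ≤ B) (hB : B ≠ ⊤) : B ≤ A := by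
  by_contra hBA
  obtain ⟨v, hvB, hvA⟩ := SetLike.not_le_iff_exists.1 hBA
  refine hB (eq_top_iff.2 fun y _ => ?_)
  obtain ⟨a, ha, k, rfl⟩ := exists_eq_mul_pow_of_not_mem hvA y
  exact mul_mem (hAB ha) (pow_mem hvB k)

theorem eq_of_valuationRing_le [IsDiscreteValuationRing B] [IsFractionRing B K]
    [ValuationRing V] [IsFractionRing V K] (hA : V ≤ A) (hB : V ≤ B) : A = B := by
  rcases le_total_of_valuationRing_le hA hB with h | h
  · exact le_antisymm h (le_of_le_of_ne_top h ne_top_of_isDiscreteValuationRing)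
  · exact le_antisymm (le_of_le_of_ne_top h ne_top_of_isDiscreteValuationRing) h

end Valuation

theorem exists_injective_iff_iSup_eq_top {A ι : Type*} [CommRing A] [Finite ι]
    (P : ι → Ideal A) (m : ℕ) :
    (∀ Q : Ideal A, Q.IsPrime → ∃ g : {i // P i ≤ Q} → Fin m, Function.Injective g) ↔
      ∀ e : Fin (m + 1) → ι, Function.Injective e → ⨆ j, P (e j) = ⊤ := by
  classical
  have := Fintype.ofFinite ι
  refine ⟨fun h e he => ?_, fun h Q hQ => ?_⟩
  · by_contra hne
    obtain ⟨Q, hQ, hle⟩ := Ideal.exists_le_maximal _ hne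
    obtain ⟨g, hg⟩ := h Q hQ.isPrime
    have hinj : Function.Injective fun j => g ⟨e j, (le_iSup (fun j => P (e j)) j).trans hle⟩ :=
      fun j j' hjj' => he (congrArg Subtype.val (hg hjj'))
    exact absurd (Fin.le_of_injective _ hinj) (Nat.not_succ_le_self m)
  · by_cases hcard : Fintype.card {i // P i ≤ Q} ≤ m
    · obtain ⟨g⟩ := Function.Embedding.nonempty_of_card_le (β := Fin m) (by simpa using hcard)
      exact ⟨g, g.injective⟩
    · obtain ⟨f⟩ := Function.Embedding.nonempty_of_card_le (α := Fin (m + 1))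
        (β := {i // P i ≤ Q}) (by rw [Fintype.card_fin]; omega)
      refine absurd (h _ (Subtype.val_injective.comp f.injective)) fun htop => hQ.ne_top ?_
      exact eq_top_iff.2 (htop ▸ iSup_le fun j => (f j).2)

theorem forall_injective_fin_two_iff {A ι : Type*} [CommRing A] (P : ι → Ideal A) :
    (∀ e : Fin 2 → ι, Function.Injective e → ⨆ j, P (e j) = ⊤) ↔
      ∀ i j, i ≠ j → P i ⊔ P j = ⊤ := by
  refine ⟨fun h i j hij => ?_, fun h e he => ?_⟩
  · have he : Function.Injective ![i, j] := by
      intro a b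
      fin_cases a <;> fin_cases b <;> simp [hij, hij.symm]
    refine eq_top_iff.2 ((h _ he).symm.le.trans (iSup_le ?_))
    exact Fin.forall_fin_two.2 ⟨le_sup_left, le_sup_right⟩
  · refine eq_top_iff.2 ((h (e 0) (e 1) (he.ne (by decide))).symm.le.trans ?_)
    exact sup_le (le_iSup (fun j => P (e j)) 0) (le_iSup (fun j => P (e j)) 1)

section Localization

variable {H R : Subring K}

theorem le_locSubring {P : Ideal H} (hP : P.IsPrime) : H ≤ locSubring H P hP :=
  fun x hx => ⟨x, hx, 1, (Ideal.ne_top_iff_one P).1 hP.ne_top, mul_one x⟩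

theorem inv_not_mem_locSubring {P : Ideal H} (hP : P.IsPrime) {u : H} (hu : u ∈ P)
    (hu0 : (u : K) ≠ 0) : (u : K)⁻¹ ∉ locSubring H P hP := by
  rintro ⟨r, hr, s, hs, e⟩
  have hsu : s = u * ⟨r, hr⟩ := Subtype.ext (by simp only [Subring.coe_mul, ← e]; field_simp)
  exact hs (hsu ▸ P.mul_mem_right _ hu)

instance isFractionRing_locSubring [IsFractionRing H K] {P : Ideal H} {hP : P.IsPrime} :
    IsFractionRing (locSubring H P hP) K :=
  isFractionRing_of_le (le_locSubring hP)

theorem mul_prod_mem_of_forall_mul_mem {ι : Type*} [Fintype ι] {A : ι → Subring K}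
    (hA : ∀ i, H ≤ A i) {x : K} {w : ι → H} (hw : ∀ i, x * w i ∈ A i) (j : ι) :
    x * ((∏ i, w i : H) : K) ∈ A j := by
  classical
  rw [← Finset.mul_prod_erase _ _ (Finset.mem_univ j), Subring.coe_mul, ← mul_assoc]
  exact mul_mem (hw j) (hA j (Subtype.prop _))

theorem exists_mul_mem_locSubring_of_not_le [IsFractionRing H K] {P Q : Ideal H}
    (hP : P.IsPrime) (hQ : Q.IsPrime) [IsDiscreteValuationRing (locSubring H P hP)]
    (hPQ : ¬P ≤ Q) (x : K) : ∃ w : H, w ∉ Q ∧ x * w ∈ locSubring H P hP := by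
  obtain ⟨u, huP, huQ⟩ := SetLike.not_le_iff_exists.1 hPQ
  have hu0 : (u : K) ≠ 0 := fun h => huQ (by simp [show u = 0 from Subtype.ext h])
  obtain ⟨k, hk⟩ := exists_mul_pow_mem (le_locSubring hP u.2) (inv_not_mem_locSubring hP huP hu0) x
  exact ⟨u ^ k, fun h => huQ (hQ.mem_of_pow_mem k h), by simpa using hk⟩

theorem exists_mul_mem_of_not_le_locSubring [IsFractionRing H K] {P : Ideal H} (hP : P.IsPrime)
    [IsDiscreteValuationRing (locSubring H P hP)] {V : Subring K} (hHV : H ≤ V)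
    (hV : ¬V ≤ locSubring H P hP) (y : K) : ∃ s : H, s ∉ P ∧ y * s ∈ V := by
  obtain ⟨v, hvV, hvP⟩ := SetLike.not_le_iff_exists.1 hV
  obtain ⟨a, ⟨h, hh, s, hs, e⟩, k, rfl⟩ := exists_eq_mul_pow_of_not_mem hvP y
  exact ⟨s, hs, by rw [mul_right_comm, e]; exact mul_mem (hHV hh) (pow_mem hvV k)⟩

theorem exists_le_locSubring_of_locSet_eq [IsFractionRing H K] (hHR : H ≤ R) {P Q : Ideal H}
    (hP : P.IsPrime) (hQ : Q.IsPrime) (hPQ : P ≤ Q) [IsDiscreteValuationRing (locSubring H P hP)]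
    (hR : ¬(R : Set K) ⊆ locSet H P H) {m : ℕ} (V : Fin m → Subring K) (hV : ∀ j, H ≤ V j)
    (heq : locSet H Q H = (⋂ j, (V j : Set K)) ∩ locSet H Q R) :
    ∃ j, V j ≤ locSubring H P hP := by
  -- otherwise every `V j` absorbs an `x ∈ R \ H_P` after multiplication by an element of
  -- `H \ P`, which puts `x` into `H_Q` up to such a factor, hence into `H_P`
  by_contra! hVP
  obtain ⟨x, hxR, hxP⟩ := Set.not_subset.1 hR
  choose s hsP hsV using fun j => exists_mul_mem_of_not_le_locSubring hP (hV j) (hVP j) x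
  have hxQ : x * ((∏ j, s j : H) : K) ∈ locSet H Q H := by
    rw [heq]
    exact ⟨Set.mem_iInter.2 (mul_prod_mem_of_forall_mul_mem hV hsV), _,
      mul_mem hxR (hHR (Subtype.prop _)), 1, (Ideal.ne_top_iff_one Q).1 hQ.ne_top, mul_one _⟩
  obtain ⟨h, hh, s', hs'Q, e⟩ := hxQ
  refine hxP ⟨h, hh, (∏ j, s j) * s', P.primeCompl.mul_mem
    (P.primeCompl.prod_mem fun j _ => hsP j) fun hs' => hs'Q (hPQ hs'), ?_⟩
  rw [Subring.coe_mul, ← mul_assoc, e]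

theorem intClosure_eq_self [IsFractionRing H K] [IsIntegrallyClosed H] : intClosure H = H := by
  rw [intClosure, IsIntegrallyClosed.integralClosure_eq_bot, Algebra.toSubring_bot]

theorem essNVal_iff_of_isIntegrallyClosed [IsFractionRing H K] [IsIntegrallyClosed H] (n : ℕ) :
    EssNVal H R n ↔ ∀ Q : Ideal H, Q.IsPrime →
      ∃ V : Fin n → Subring K, (∀ i, H ≤ V i ∧ ValuationRing (V i)) ∧
        locSet H Q H = (⋂ i, (V i : Set K)) ∩ locSet H Q R := by
  rw [EssNVal, intClosure_eq_self]

section Representation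

variable {t : ℕ} {P : Fin t → Ideal H} {hP : ∀ i, (P i).IsPrime}

theorem locSet_eq_iInter_inter [IsFractionRing H K] (hHR : H ≤ R)
    (hrep : (H : Set K) = (⋂ i, locSet H (P i) H) ∩ (R : Set K))
    (hdvr : ∀ i, IsDiscreteValuationRing (locSubring H (P i) (hP i)))
    {Q : Ideal H} (hQ : Q.IsPrime) :
    locSet H Q H =
      (⋂ i : {i // P i ≤ Q}, (locSubring H (P i) (hP i) : Set K)) ∩ locSet H Q R := by
  refine subset_antisymm (fun x ⟨r, hr, s, hs, e⟩ => ⟨Set.mem_iInter.2 fun i =>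
    ⟨r, hr, s, fun hsP => hs (i.2 hsP), e⟩, ⟨r, hHR hr, s, hs, e⟩⟩) ?_
  rintro x ⟨hx, r, hr, s, hs, e⟩
  have hw (i : Fin t) : ∃ w : H, w ∉ Q ∧ x * w ∈ locSubring H (P i) (hP i) := by
    by_cases hle : P i ≤ Q
    · exact ⟨1, (Ideal.ne_top_iff_one Q).1 hQ.ne_top, by simpa using Set.mem_iInter.1 hx ⟨i, hle⟩⟩
    · have := hdvr i
      exact exists_mul_mem_locSubring_of_not_le (hP i) hQ hle x
  choose w hwQ hwP using hw
  refine ⟨x * (s * ∏ i, w i : H), ?_, s * ∏ i, w i,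
    Q.primeCompl.mul_mem hs (Q.primeCompl.prod_mem fun i _ => hwQ i), rfl⟩
  rw [← SetLike.mem_coe, hrep, Subring.coe_mul, mul_left_comm]
  refine ⟨Set.mem_iInter.2 fun i => ?_, ?_⟩
  · exact mul_mem (le_locSubring (hP i) s.2)
      (mul_prod_mem_of_forall_mul_mem (fun i => le_locSubring (hP i)) hwP i)
  · rw [← mul_assoc, mul_comm (s : K), e]
    exact mul_mem hr (hHR (Subtype.prop _))

theorem not_subset_locSet_of_irredundant
    (hirr : ∀ j, ¬((⋂ i ∈ ({j}ᶜ : Set (Fin t)), locSet H (P i) H) ∩ (R : Set K)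
        ⊆ locSet H (P j) H)) (j : Fin t) : ¬(R : Set K) ⊆ locSet H (P j) H :=
  fun h => hirr j (Set.inter_subset_right.trans h)

theorem locSubring_injective_of_irredundant
    (hirr : ∀ j, ¬((⋂ i ∈ ({j}ᶜ : Set (Fin t)), locSet H (P i) H) ∩ (R : Set K)
        ⊆ locSet H (P j) H)) : Function.Injective fun i => locSubring H (P i) (hP i) := by
  intro i j hij
  by_contra hne
  refine hirr j fun x hx => ?_
  have hxi : x ∈ locSubring H (P i) (hP i) := Set.mem_iInter₂.1 hx.1 i hne
  rwa [show locSubring H (P i) (hP i) = locSubring H (P j) (hP j) from hij] at hxi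

theorem exists_injective_of_locSet_eq [IsFractionRing H K] (hHR : H ≤ R)
    (hdvr : ∀ i, IsDiscreteValuationRing (locSubring H (P i) (hP i)))
    (hirr : ∀ j, ¬((⋂ i ∈ ({j}ᶜ : Set (Fin t)), locSet H (P i) H) ∩ (R : Set K)
        ⊆ locSet H (P j) H))
    {Q : Ideal H} (hQ : Q.IsPrime) {m : ℕ} (V : Fin m → Subring K)
    (hV : ∀ j, H ≤ V j ∧ ValuationRing (V j))
    (heq : locSet H Q H = (⋂ j, (V j : Set K)) ∩ locSet H Q R) :
    ∃ g : {i // P i ≤ Q} → Fin m, Function.Injective g := by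
  have hle (i : {i // P i ≤ Q}) : ∃ j, V j ≤ locSubring H (P i) (hP i) :=
    have := hdvr i
    exists_le_locSubring_of_locSet_eq hHR (hP i) hQ i.2 (not_subset_locSet_of_irredundant hirr i)
      V (fun j => (hV j).1) heq
  choose g hg using hle
  refine ⟨g, fun i i' hii' => Subtype.ext (locSubring_injective_of_irredundant (hP := hP) hirr ?_)⟩
  have := (hV (g i)).2
  have := isFractionRing_of_le (hV (g i)).1
  have := hdvr i
  have := hdvr i'
  exact eq_of_valuationRing_le (hg i) (hii' ▸ hg i')

theorem exists_valuationRing_of_injective [IsFractionRing H K] (hHR : H ≤ R)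
    (hrep : (H : Set K) = (⋂ i, locSet H (P i) H) ∩ (R : Set K))
    (hdvr : ∀ i, IsDiscreteValuationRing (locSubring H (P i) (hP i)))
    {Q : Ideal H} (hQ : Q.IsPrime) {m : ℕ} (g : {i // P i ≤ Q} → Fin m)
    (hg : Function.Injective g) :
    ∃ V : Fin m → Subring K, (∀ j, H ≤ V j ∧ ValuationRing (V j)) ∧
      locSet H Q H = (⋂ j, (V j : Set K)) ∩ locSet H Q R := by
  refine ⟨Function.extend g (fun i => locSubring H (P i) (hP i)) ⊤, fun j => ?_, ?_⟩
  · by_cases hj : ∃ i, g i = j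
    · obtain ⟨i, rfl⟩ := hj
      have := hdvr i
      rw [hg.extend_apply]
      exact ⟨le_locSubring (hP i), inferInstance⟩
    · rw [Function.extend_apply' _ _ _ hj]
      exact ⟨le_top, valuationRing_top⟩
  · rw [locSet_eq_iInter_inter hHR hrep hdvr hQ, ← Subring.coe_iInf, ← Subring.coe_iInf,
      iInf_extend_top hg]

theorem essNVal_iff_exists_injective [IsFractionRing H K] [IsIntegrallyClosed H] (hHR : H ≤ R)
    (hrep : (H : Set K) = (⋂ i, locSet H (P i) H) ∩ (R : Set K))
    (hdvr : ∀ i, IsDiscreteValuationRing (locSubring H (P i) (hP i)))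
    (hirr : ∀ j, ¬((⋂ i ∈ ({j}ᶜ : Set (Fin t)), locSet H (P i) H) ∩ (R : Set K)
        ⊆ locSet H (P j) H)) (m : ℕ) :
    EssNVal H R m ↔ ∀ Q : Ideal H, Q.IsPrime →
      ∃ g : {i // P i ≤ Q} → Fin m, Function.Injective g := by
  rw [essNVal_iff_of_isIntegrallyClosed]
  refine forall₂_congr fun Q hQ => ⟨fun ⟨V, hV, heq⟩ => ?_, fun ⟨g, hg⟩ => ?_⟩
  · exact exists_injective_of_locSet_eq hHR hdvr hirr hQ V hV heq
  · exact exists_valuationRing_of_injective hHR hrep hdvr hQ g hg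

end Representation

end Localization

theorem statement2_general {K : Type*} [Field K] (D H R : Subring K)
    (hquot : ∀ x : K, ∃ a ∈ D, ∃ b ∈ D, b ≠ 0 ∧ x * b = a)
    (hDH : D ≤ H) (hHR : H ≤ R)
    (hic : IsIntegrallyClosed H)
    (t : ℕ) (P : Fin t → Ideal H) (hP : ∀ i, (P i).IsPrime)
    (hrep : (H : Set K) = (⋂ i, locSet H (P i) H) ∩ (R : Set K))
    (hdvr : ∀ i, IsDiscreteValuationRing (locSubring H (P i) (hP i)))
    (hirr : ∀ j, ¬ ((⋂ i ∈ ({j}ᶜ : Set (Fin t)), locSet H (P i) H) ∩ (R : Set K)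
        ⊆ locSet H (P j) H))
    (n : ℕ) :
    (t ≤ n → EssNVal H R n) ∧
    (n < t →
      ((EssNVal H R n ↔
          ∀ e : Fin (n + 1) → Fin t, Function.Injective e → (⨆ j, P (e j)) = ⊤) ∧
       (EssNVal H R 1 ↔ ∀ i j, i ≠ j → P i ⊔ P j = ⊤))) := by
  have := isFractionRing_of_forall_exists_mul_eq hquot hDH
  have hchar (m : ℕ) : EssNVal H R m ↔
      ∀ e : Fin (m + 1) → Fin t, Function.Injective e → (⨆ j, P (e j)) = ⊤ :=
    (essNVal_iff_exists_injective hHR hrep hdvr hirr m).trans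
      (exists_injective_iff_iSup_eq_top P m)
  refine ⟨fun htn => (hchar n).2 fun e he => ?_, fun _ => ⟨hchar n, ?_⟩⟩
  · exact absurd (Fin.le_of_injective e he) (by omega)
  · exact (hchar 1).trans (forall_injective_fin_two_iff P)

/-- Let `D ⊆ H ⊆ R` be domains (subrings of the quotient field `K` of `D`) with
`R` a proper overring of `D` and `H` integrally closed.  Suppose `H = H_{P 1} ∩ ⋯ ∩ H_{P t} ∩ R`
with `t > 0`, each `H_{P i}` a DVR irredundant in this representation.  If `t ≤ n` then `H` is
essentially `n`-valuated in `R`; and if `n < t` then (1) `H` is essentially `n`-valuated in `R`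
iff any `n+1` distinct ideals among the `P i` sum to `H`, and (2) `H` is essentially
one-valuated in `R` iff the `P i` are pairwise comaximal. -/
theorem statement2 {K : Type*} [Field K] (D H R : Subring K)
    (hquot : ∀ x : K, ∃ a ∈ D, ∃ b ∈ D, b ≠ 0 ∧ x * b = a)
    (hDH : D ≤ H) (hHR : H ≤ R) (hDR : D ≠ R)
    (hic : IsIntegrallyClosed H)
    (t : ℕ) (ht : 0 < t) (P : Fin t → Ideal H) (hP : ∀ i, (P i).IsPrime)
    (hrep : (H : Set K) = (⋂ i, locSet H (P i) H) ∩ (R : Set K))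
    (hdvr : ∀ i, IsDiscreteValuationRing (locSubring H (P i) (hP i)))
    (hirr : ∀ j, ¬ ((⋂ i ∈ ({j}ᶜ : Set (Fin t)), locSet H (P i) H) ∩ (R : Set K)
        ⊆ locSet H (P j) H))
    (n : ℕ) (hn : 0 < n) :
    (t ≤ n → EssNVal H R n) ∧
    (n < t →
      ((EssNVal H R n ↔
          ∀ e : Fin (n + 1) → Fin t, Function.Injective e → (⨆ j, P (e j)) = ⊤) ∧
       (EssNVal H R 1 ↔ ∀ i j, i ≠ j → P i ⊔ P j = ⊤))) :=
  statement2_general D H R hquot hDH hHR hic t P hP hrep hdvr hirr n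

end ArticleOT
end

section
/- Let D be an analytically irreducible local Noetherian domain of Krull dimension greater than 1, and let v_1,…,v_n be valuations on the quotient field of the completion D̂ whose valuation rings are hidden prime divisors of D̂. Then for each z ∈ D̂ there exists d ∈ D (viewed in D̂ via the canonical embedding D → D̂) such that v_i(z) = v_i(d) for every i = 1,…,n. -/
/-!
If `V` is a DVR and `v(z) = k`, every element congruent to `z` modulo `m_V ^ (k + 1)` has the same
value, since it is `z` times a unit. A hidden prime divisor of `D̂` dominates `D̂`, so it maps
`m̂ ^ N` into `m_V ^ N`; and every `z ∈ D̂` is congruent to some `d ∈ D` modulo `m̂ ^ N`, because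
for Noetherian `D` the kernel of `D̂ → D / m ^ N` is `m̂ ^ N`. Taking `N` larger than every
`v_i(z)` gives `v_i(d) = v_i(z)` for all `i`.
-/

namespace ArticleOT

variable {K : Type*} [Field K]

/-- The localization `D_p` of (the image under `φ` of) `D` at a prime ideal `p` of `D`, as a
subset of the field `K`. -/
def locPrim {D : Type*} [CommRing D] (φ : D →+* K) (p : Ideal D) : Set K :=
  {x : K | ∃ a : D, ∃ s : D, s ∉ p ∧ x * φ s = φ a}

end ArticleOT

open IsLocalRing

theorem associated_of_sub_mem_span_singleton_mul_maximalIdeal {R : Type*} [CommRing R]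
    [IsLocalRing R] {x y : R} (h : x - y ∈ Ideal.span {x} * maximalIdeal R) :
    Associated x y := by
  obtain ⟨c, hc, hxc⟩ := Ideal.mem_span_singleton_mul.1 h
  have hy : y = x * (1 - c) := by rw [mul_sub, mul_one, hxc, sub_sub_cancel]
  rw [hy]
  exact associated_mul_unit_right x _ (isUnit_one_sub_self_of_mem_nonunits c hc)

theorem IsDiscreteValuationRing.exists_maximalIdeal_pow_le_span_singleton_mul {R : Type*}
    [CommRing R] [IsDomain R] [IsDiscreteValuationRing R] {x : R} (hx : x ≠ 0) :
    ∃ N : ℕ, IsLocalRing.maximalIdeal R ^ N ≤ Ideal.span {x} * IsLocalRing.maximalIdeal R := by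
  obtain ⟨ϖ, hϖ⟩ := exists_irreducible R
  obtain ⟨n, u, rfl⟩ := eq_unit_mul_pow_irreducible hx hϖ
  refine ⟨n + 1, ?_⟩
  rw [hϖ.maximalIdeal_eq, Ideal.span_singleton_pow, Ideal.span_singleton_mul_span_singleton,
    Ideal.span_singleton_le_span_singleton, mul_assoc, ← pow_succ]
  exact (associated_unit_mul_left _ _ u.isUnit).dvd

theorem map_mem_maximalIdeal_pow {A B : Type*} [CommRing A] [CommRing B]
    [IsLocalRing A] [IsLocalRing B] (f : A →+* B) [IsLocalHom f] {a : A} {N : ℕ}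
    (ha : a ∈ maximalIdeal A ^ N) : f a ∈ maximalIdeal B ^ N := by
  have hfa := Ideal.mem_map_of_mem f ha
  rw [Ideal.map_pow] at hfa
  exact Ideal.pow_right_mono (map_maximalIdeal_le f) N hfa

namespace AdicCompletion

variable {R : Type*} [CommRing R] [IsLocalRing R] [IsNoetherianRing R]

theorem exists_sub_algebraMap_mem_maximalIdeal_pow (x : AdicCompletion (maximalIdeal R) R)
    (N : ℕ) :
    ∃ d : R, x - algebraMap R _ d ∈ maximalIdeal (AdicCompletion (maximalIdeal R) R) ^ N := by
  obtain ⟨d, hd⟩ := Submodule.Quotient.mk_surjective _ (x.val N)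
  refine ⟨d, ?_⟩
  have hker : x - algebraMap R _ d ∈ (eval (maximalIdeal R) R N).ker := by
    rw [LinearMap.mem_ker, map_sub, eval_apply, eval_apply, ← hd, sub_eq_zero]
    rfl
  rwa [← pow_smul_top_eq_ker_eval (maximalIdeal R).fg_of_isNoetherianRing,
    Ideal.smul_top_eq_map, Submodule.restrictScalars_mem, Ideal.map_pow,
    ← maximalIdeal_eq_map] at hker

theorem exists_associated_algebraMap {ι : Type*} [Finite ι] {S : ι → Type*}
    [∀ i, CommRing (S i)] [∀ i, IsDomain (S i)] [∀ i, IsDiscreteValuationRing (S i)]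
    (ψ : ∀ i, AdicCompletion (maximalIdeal R) R →+* S i) [∀ i, IsLocalHom (ψ i)]
    (x : AdicCompletion (maximalIdeal R) R) (hx : ∀ i, ψ i x ≠ 0) :
    ∃ d : R, ∀ i, Associated (ψ i x) (ψ i (algebraMap R _ d)) := by
  choose N hN using fun i =>
    IsDiscreteValuationRing.exists_maximalIdeal_pow_le_span_singleton_mul (hx i)
  obtain ⟨M, hM⟩ := Finite.bddAbove_range N
  obtain ⟨d, hd⟩ := exists_sub_algebraMap_mem_maximalIdeal_pow x M
  refine ⟨d, fun i => associated_of_sub_mem_span_singleton_mul_maximalIdeal (hN i ?_)⟩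
  rw [← map_sub]
  exact Ideal.pow_le_pow_right (hM ⟨i, rfl⟩) (map_mem_maximalIdeal_pow (ψ i) hd)

end AdicCompletion

theorem Subring.exists_mem_eq_mul_of_dvd {K : Type*} [Field K] {V : Subring K} {x y : V}
    (h : x ∣ y) : ∃ b ∈ V, (y : K) = x * b := by
  obtain ⟨c, rfl⟩ := h
  exact ⟨c, c.2, Subring.coe_mul _ _ _⟩

namespace ArticleOT

variable {K : Type*} [Field K]

theorem IsHiddenPrimeDivisor.isLocalHom {D : Type*} [CommRing D] {φ : D →+* K}
    {V : Subring K} {hV : ∀ r, φ r ∈ V} (h : IsHiddenPrimeDivisor φ V hV) :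
    IsLocalHom (φ.codRestrict V hV) :=
  ⟨fun a ha => not_not.1 fun hna => h.2.1 a hna ha⟩

/-- Equality of values `v i z = v i d` is expressed by mutual divisibility in the valuation ring
`V i`. -/
theorem statement7_general (D : Type*) [CommRing D] [IsLocalRing D] [IsNoetherianRing D]
    (Khat : Type*) [Field Khat]
    [Algebra (AdicCompletion (IsLocalRing.maximalIdeal D) D) Khat]
    (n : ℕ) (V : Fin n → Subring Khat)
    (hmem : ∀ i (r : AdicCompletion (IsLocalRing.maximalIdeal D) D),
      algebraMap (AdicCompletion (IsLocalRing.maximalIdeal D) D) Khat r ∈ V i)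
    (hhid : ∀ i, IsHiddenPrimeDivisor
      (algebraMap (AdicCompletion (IsLocalRing.maximalIdeal D) D) Khat) (V i) (hmem i)) :
    ∀ z : AdicCompletion (IsLocalRing.maximalIdeal D) D, ∃ d : D, ∀ i,
      (∃ a ∈ V i, algebraMap (AdicCompletion (IsLocalRing.maximalIdeal D) D) Khat z =
        algebraMap (AdicCompletion (IsLocalRing.maximalIdeal D) D) Khat
          (algebraMap D (AdicCompletion (IsLocalRing.maximalIdeal D) D) d) * a) ∧
      (∃ b ∈ V i, algebraMap (AdicCompletion (IsLocalRing.maximalIdeal D) D) Khat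
          (algebraMap D (AdicCompletion (IsLocalRing.maximalIdeal D) D) d) =
        algebraMap (AdicCompletion (IsLocalRing.maximalIdeal D) D) Khat z * b) := by
  intro z
  by_cases hz : algebraMap _ Khat z = 0
  · exact ⟨0, fun i => ⟨⟨1, one_mem _, by simp [hz]⟩, ⟨1, one_mem _, by simp [hz]⟩⟩⟩
  have : ∀ i, IsDiscreteValuationRing (V i) := fun i => (hhid i).1
  have := fun i => (hhid i).isLocalHom
  obtain ⟨d, hd⟩ := AdicCompletion.exists_associated_algebraMap
    (fun i => (algebraMap _ Khat).codRestrict (V i) (hmem i)) z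
    (fun i h => hz (congrArg Subtype.val h))
  exact ⟨d, fun i => ⟨Subring.exists_mem_eq_mul_of_dvd (hd i).symm.dvd,
    Subring.exists_mem_eq_mul_of_dvd (hd i).dvd⟩⟩

/-- Lemma 5.2 of the paper.  Approximation of elements of the completion of an
analytically irreducible local Noetherian domain by elements of the ring, with respect to
finitely many hidden prime divisors of the completion.  Equality of values `v i z = v i d` is
expressed by mutual divisibility in the valuation ring `V i`. -/
theorem statement7 (D : Type*) [CommRing D] [IsDomain D] [IsLocalRing D] [IsNoetherianRing D]
    (hdim : 1 < ringKrullDim D)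
    [IsDomain (AdicCompletion (IsLocalRing.maximalIdeal D) D)]
    (Khat : Type*) [Field Khat]
    [Algebra (AdicCompletion (IsLocalRing.maximalIdeal D) D) Khat]
    [IsFractionRing (AdicCompletion (IsLocalRing.maximalIdeal D) D) Khat]
    (n : ℕ) (V : Fin n → Subring Khat)
    (hmem : ∀ i (r : AdicCompletion (IsLocalRing.maximalIdeal D) D),
      algebraMap (AdicCompletion (IsLocalRing.maximalIdeal D) D) Khat r ∈ V i)
    (hhid : ∀ i, IsHiddenPrimeDivisor
      (algebraMap (AdicCompletion (IsLocalRing.maximalIdeal D) D) Khat) (V i) (hmem i)) :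
    ∀ z : AdicCompletion (IsLocalRing.maximalIdeal D) D, ∃ d : D, ∀ i,
      (∃ a ∈ V i, algebraMap (AdicCompletion (IsLocalRing.maximalIdeal D) D) Khat z =
        algebraMap (AdicCompletion (IsLocalRing.maximalIdeal D) D) Khat
          (algebraMap D (AdicCompletion (IsLocalRing.maximalIdeal D) D) d) * a) ∧
      (∃ b ∈ V i, algebraMap (AdicCompletion (IsLocalRing.maximalIdeal D) D) Khat
          (algebraMap D (AdicCompletion (IsLocalRing.maximalIdeal D) D) d) =
        algebraMap (AdicCompletion (IsLocalRing.maximalIdeal D) D) Khat z * b) :=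
  statement7_general D Khat n V hmem hhid

end ArticleOT
end

section
/- Let D be an analytically irreducible local Noetherian domain of Krull dimension greater than 1 with quotient field F and completion D̂, let V_1,…,V_n be hidden prime divisors of D, and let V'_1,…,V'_n be valuation overrings of D̂ such that V'_i ∩ F = V_i for each i. Let f be a nonzero element of D. Then for each i, V_i is irredundant in the intersection V_1 ∩ ⋯ ∩ V_n ∩ D_f if and only if V'_i is irredundant in the intersection V'_1 ∩ ⋯ ∩ V'_n ∩ D̂_f. -/
/-! Write `x ∈ D̂_f` as `c / f^k` with `c ∈ D̂`. Each `V j` is a DVR dominating `D` and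
containing `f^k ≠ 0`, so `f^k` divides every element of a power `m^t` of the maximal ideal in
`V j`. Approximating `c` by `d ∈ D` modulo `m^N D̂` for `N` large gives `y = d / f^k ∈ D_f` with
`x - y ∈ V' j` for every `j`. Together with `V' j ∩ F = V j`, this density of `D_f` in `D̂_f`
transfers irredundance in both directions. -/

namespace ArticleOT

variable {K : Type*} [Field K]

open IsLocalRing

lemma exists_sub_algebraMap_mem_map_pow {R : Type*} [CommRing R] {I : Ideal R} (hI : I.FG)
    (x : AdicCompletion I R) (N : ℕ) :
    ∃ c : R, x - algebraMap R (AdicCompletion I R) c ∈ (I ^ N).map (algebraMap R _) := by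
  obtain ⟨c, hc⟩ := Submodule.mkQ_surjective _ (AdicCompletion.eval I R N x)
  refine ⟨c, ?_⟩
  have hker : x - AdicCompletion.of I R c ∈ (AdicCompletion.eval I R N).ker := by
    rw [LinearMap.mem_ker, map_sub, AdicCompletion.eval_of, hc, sub_self]
  rwa [← AdicCompletion.pow_smul_top_eq_ker_eval hI, Ideal.smul_top_eq_map,
    Submodule.restrictScalars_mem] at hker

lemma exists_map_maximalIdeal_pow_le_span {R S : Type*} [CommRing R] [IsLocalRing R]
    [CommRing S] [IsDomain S] [IsDiscreteValuationRing S] (χ : R →+* S) [IsLocalHom χ]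
    {a : S} (ha : a ≠ 0) : ∃ t : ℕ, (maximalIdeal R ^ t).map χ ≤ Ideal.span {a} := by
  obtain ⟨ϖ, hϖ⟩ := IsDiscreteValuationRing.exists_irreducible S
  obtain ⟨t, ht⟩ := IsDiscreteValuationRing.ideal_eq_span_pow_irreducible
    (Ideal.span_singleton_eq_bot.not.2 ha) hϖ
  refine ⟨t, ?_⟩
  rw [ht, Ideal.map_pow, ← Ideal.span_singleton_pow, ← hϖ.maximalIdeal_eq]
  exact Ideal.pow_right_mono (map_maximalIdeal_le χ) t

lemma exists_mul_inv_mem_of_mem_maximalIdeal_pow {R : Type*} [CommRing R] [IsLocalRing R]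
    (Φ : R →+* K) {V : Subring K} [IsDiscreteValuationRing V] (hV : ∀ r, Φ r ∈ V)
    [IsLocalHom (Φ.codRestrict V hV)] {b : K} (hb : b ∈ V) (hb0 : b ≠ 0) :
    ∃ t : ℕ, ∀ g ∈ maximalIdeal R ^ t, Φ g * b⁻¹ ∈ V := by
  obtain ⟨t, ht⟩ := exists_map_maximalIdeal_pow_le_span (Φ.codRestrict V hV)
    (a := ⟨b, hb⟩) (Subtype.coe_ne_coe.1 hb0)
  refine ⟨t, fun g hg => ?_⟩
  obtain ⟨v, hv⟩ := Ideal.mem_span_singleton'.1 (ht (Ideal.mem_map_of_mem _ hg))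
  have hΦg : Φ g = v * b := congrArg Subtype.val hv.symm
  rw [hΦg, mul_inv_cancel_right₀ hb0]
  exact v.2

lemma mul_mem_of_mem_map {A B : Type*} [CommRing A] [CommRing B] (φ : A →+* B) (ψ : B →+* K)
    {S : Subring K} (hS : ∀ z, ψ z ∈ S) {I : Ideal A} {b : K}
    (hI : ∀ g ∈ I, ψ (φ g) * b ∈ S) {z : B} (hz : z ∈ I.map φ) : ψ z * b ∈ S := by
  let J : Ideal B :=
    { carrier := {z | ψ z * b ∈ S}
      add_mem' := fun h₁ h₂ => by
        simpa only [Set.mem_ofPred_eq, map_add, add_mul] using add_mem h₁ h₂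
      zero_mem' := by simp
      smul_mem' := fun c z hz => by
        simpa only [Set.mem_ofPred_eq, smul_eq_mul, map_mul, mul_assoc] using mul_mem (hS c) hz }
  exact (show I.map φ ≤ J from Ideal.map_le_iff_le_comap.2 hI) hz

lemma awayS_le {D : Type*} [CommRing D] (φ : D →+* K) (f : D) {S : Subring K}
    (hS : ∀ r, φ r ∈ S) (hf : (φ f)⁻¹ ∈ S) : awayS φ f ≤ S :=
  Subring.closure_le.2 <| Set.union_subset (Set.range_subset_iff.2 hS)
    (Set.singleton_subset_iff.2 hf)

lemma inv_mem_awayS {D : Type*} [CommRing D] (φ : D →+* K) (f : D) : (φ f)⁻¹ ∈ awayS φ f :=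
  Subring.subset_closure (Set.mem_union_right _ rfl)

lemma exists_mul_pow_eq_of_mem_awayS {D : Type*} [CommRing D] (φ : D →+* K) (f : D) {x : K}
    (hx : x ∈ awayS φ f) : ∃ (c : D) (k : ℕ), x * φ f ^ k = φ c := by
  induction hx using Subring.closure_induction with
  | mem x hx =>
    rcases hx with ⟨r, rfl⟩ | rfl
    · exact ⟨r, 0, by simp⟩
    · by_cases h : φ f = 0
      · exact ⟨0, 0, by simp [h]⟩
      · exact ⟨1, 1, by simp [h]⟩
  | zero => exact ⟨0, 0, by simp⟩
  | one => exact ⟨1, 0, by simp⟩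
  | add x y _ _ hx hy =>
    obtain ⟨c₁, k₁, e₁⟩ := hx
    obtain ⟨c₂, k₂, e₂⟩ := hy
    refine ⟨c₁ * f ^ k₂ + c₂ * f ^ k₁, k₁ + k₂, ?_⟩
    rw [map_add, map_mul, map_mul, map_pow, map_pow, ← e₁, ← e₂]
    ring
  | neg x _ hx =>
    obtain ⟨c, k, e⟩ := hx
    exact ⟨-c, k, by rw [neg_mul, e, map_neg]⟩
  | mul x y _ _ hx hy =>
    obtain ⟨c₁, k₁, e₁⟩ := hx
    obtain ⟨c₂, k₂, e₂⟩ := hy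
    refine ⟨c₁ * c₂, k₁ + k₂, ?_⟩
    rw [map_mul, ← e₁, ← e₂]
    ring

theorem exists_sub_mem_of_mem_awayS {D ι : Type*} [CommRing D] [IsLocalRing D]
    [IsNoetherianRing D] [Fintype ι] (ψ : AdicCompletion (maximalIdeal D) D →+* K)
    (V V' : ι → Subring K)
    (hV : ∀ j r, (ψ.comp (algebraMap D (AdicCompletion (maximalIdeal D) D))) r ∈ V j)
    (hdvr : ∀ j, IsDiscreteValuationRing (V j))
    (hloc : ∀ j, IsLocalHom
      ((ψ.comp (algebraMap D (AdicCompletion (maximalIdeal D) D))).codRestrict (V j) (hV j)))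
    (hVV' : ∀ j, V j ≤ V' j) (hV' : ∀ j z, ψ z ∈ V' j) {f : D}
    (hf : ψ (algebraMap D (AdicCompletion (maximalIdeal D) D) f) ≠ 0) {x : K}
    (hx : x ∈ awayS ψ (algebraMap D (AdicCompletion (maximalIdeal D) D) f)) :
    ∃ y ∈ awayS (ψ.comp (algebraMap D (AdicCompletion (maximalIdeal D) D))) f,
      ∀ j, x - y ∈ V' j := by
  set Φ := ψ.comp (algebraMap D (AdicCompletion (maximalIdeal D) D))
  obtain ⟨c, k, hck⟩ : ∃ c k, x * Φ f ^ k = ψ c := exists_mul_pow_eq_of_mem_awayS ψ _ hx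
  have hfk : Φ f ^ k ≠ 0 := pow_ne_zero k hf
  have hdiv : ∀ j, ∃ t : ℕ, ∀ g ∈ maximalIdeal D ^ t, Φ g * (Φ f ^ k)⁻¹ ∈ V j := fun j =>
    have := hdvr j
    have := hloc j
    exists_mul_inv_mem_of_mem_maximalIdeal_pow Φ (hV j) (pow_mem (hV j f) k) hfk
  choose t ht using hdiv
  obtain ⟨d, hd⟩ := exists_sub_algebraMap_mem_map_pow (IsNoetherian.noetherian _) c
    (Finset.univ.sup t)
  refine ⟨Φ d * (Φ f ^ k)⁻¹, mul_mem (phi_mem_awayS Φ f d) ?_, fun j => ?_⟩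
  · rw [← inv_pow]
    exact pow_mem (inv_mem_awayS Φ f) k
  · have hmem := mul_mem_of_mem_map _ ψ (hV' j) (fun g hg => hVV' j (ht j g
      (Ideal.pow_le_pow_right (Finset.le_sup (Finset.mem_univ j)) hg))) hd
    rwa [map_sub, sub_mul, ← hck, mul_inv_cancel_right₀ hfk] at hmem

def IsIrredundant {ι : Type*} (W : ι → Subring K) (R : Set K) (i : ι) : Prop :=
  ¬ ((⋂ j ∈ ({i}ᶜ : Set ι), (W j : Set K)) ∩ R ⊆ W i)

theorem isIrredundant_iff_of_forall_exists_sub {ι : Type*} {V V' : ι → Subring K}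
    {F A B : Set K} (hcap : ∀ j, (V' j : Set K) ∩ F = V j) (hAF : A ⊆ F) (hAB : A ⊆ B)
    (hdense : ∀ x ∈ B, ∃ y ∈ A, ∀ j, x - y ∈ V' j) (i : ι) :
    IsIrredundant V A i ↔ IsIrredundant V' B i := by
  have hVV' : ∀ j, (V j : Set K) ⊆ V' j := fun j => (hcap j).ge.trans Set.inter_subset_left
  refine not_congr ⟨fun h x ⟨hx, hxB⟩ => ?_, fun h x ⟨hx, hxA⟩ => ?_⟩
  · obtain ⟨y, hyA, hxy⟩ := hdense x hxB
    have hyV : y ∈ (⋂ j ∈ ({i}ᶜ : Set ι), (V j : Set K)) := Set.mem_iInter₂.2 fun j hj => by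
      rw [← hcap j]
      exact ⟨by simpa using sub_mem (Set.mem_iInter₂.1 hx j hj) (hxy j), hAF hyA⟩
    simpa using add_mem (hVV' i (h ⟨hyV, hyA⟩)) (hxy i)
  · rw [← hcap i]
    exact ⟨h ⟨Set.mem_iInter₂.2 fun j hj => hVV' j (Set.mem_iInter₂.1 hx j hj), hAB hxA⟩,
      hAF hxA⟩

/-- The quotient field `F` of `D` is realized inside the quotient field `Khat` of the
completion as the set of fractions of elements of `D`. -/
theorem statement8_general (D : Type*) [CommRing D] [IsLocalRing D] [IsNoetherianRing D]
    (Khat : Type*) [Field Khat]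
    [Algebra (AdicCompletion (IsLocalRing.maximalIdeal D) D) Khat]
    [IsFractionRing (AdicCompletion (IsLocalRing.maximalIdeal D) D) Khat]
    (f : D) (hf0 : f ≠ 0)
    (n : ℕ) (V V' : Fin n → Subring Khat)
    -- each `V i` is a hidden prime divisor of `D`; it lies in the quotient field `F` of `D`
    (hmem : ∀ i (r : D), ((algebraMap (AdicCompletion (IsLocalRing.maximalIdeal D) D)
      Khat).comp (algebraMap D (AdicCompletion (IsLocalRing.maximalIdeal D) D))) r ∈ V i)
    (hhid : ∀ i, IsHiddenPrimeDivisor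
      ((algebraMap (AdicCompletion (IsLocalRing.maximalIdeal D) D) Khat).comp
        (algebraMap D (AdicCompletion (IsLocalRing.maximalIdeal D) D))) (V i) (hmem i))
    -- each `V' i` is a valuation overring of the completion extending `V i`,
    -- i.e. `V' i ∩ F = V i`
    (hmem' : ∀ i (r : AdicCompletion (IsLocalRing.maximalIdeal D) D),
      algebraMap (AdicCompletion (IsLocalRing.maximalIdeal D) D) Khat r ∈ V' i)
    (hcap : ∀ i, (V' i : Set Khat) ∩ {x : Khat | ∃ a b : D,
      ((algebraMap (AdicCompletion (IsLocalRing.maximalIdeal D) D) Khat).comp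
        (algebraMap D (AdicCompletion (IsLocalRing.maximalIdeal D) D))) b ≠ 0 ∧
      x * ((algebraMap (AdicCompletion (IsLocalRing.maximalIdeal D) D) Khat).comp
        (algebraMap D (AdicCompletion (IsLocalRing.maximalIdeal D) D))) b =
      ((algebraMap (AdicCompletion (IsLocalRing.maximalIdeal D) D) Khat).comp
        (algebraMap D (AdicCompletion (IsLocalRing.maximalIdeal D) D))) a} = (V i : Set Khat)) :
    -- conclusion: `V i` is irredundant in `V 1 ∩ ⋯ ∩ V n ∩ D_f` iff `V' i` is irredundant in
    -- `V' 1 ∩ ⋯ ∩ V' n ∩ D̂_f`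
    ∀ i : Fin n,
      (¬ ((⋂ j ∈ ({i}ᶜ : Set (Fin n)), (V j : Set Khat)) ∩
        (awayS ((algebraMap (AdicCompletion (IsLocalRing.maximalIdeal D) D) Khat).comp
          (algebraMap D (AdicCompletion (IsLocalRing.maximalIdeal D) D))) f : Set Khat)
        ⊆ (V i : Set Khat))) ↔
      (¬ ((⋂ j ∈ ({i}ᶜ : Set (Fin n)), (V' j : Set Khat)) ∩
        (awayS (algebraMap (AdicCompletion (IsLocalRing.maximalIdeal D) D) Khat)
          (algebraMap D (AdicCompletion (IsLocalRing.maximalIdeal D) D) f) : Set Khat)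
        ⊆ (V' i : Set Khat))) := by
  intro i
  set φ := algebraMap D (AdicCompletion (IsLocalRing.maximalIdeal D) D)
  set ψ := algebraMap (AdicCompletion (IsLocalRing.maximalIdeal D) D) Khat
  have hf : ψ (φ f) ≠ 0 := (map_ne_zero_iff ψ (IsFractionRing.injective _ Khat)).2
    ((map_ne_zero_iff _ (AdicCompletion.of_injective _ D)).2 hf0)
  refine isIrredundant_iff_of_forall_exists_sub hcap ?_ ?_ (fun x hx =>
    exists_sub_mem_of_mem_awayS ψ V V' hmem (fun j => (hhid j).1)
      (fun j => ⟨fun r hr => by_contra fun h => (hhid j).2.1 r h hr⟩)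
      (fun j => (hcap j).ge.trans Set.inter_subset_left) hmem' hf hx) i
  · intro x hx
    obtain ⟨c, k, hck⟩ := exists_mul_pow_eq_of_mem_awayS _ f hx
    exact ⟨c, f ^ k, by rw [map_pow]; exact pow_ne_zero k hf, by rwa [map_pow]⟩
  · exact awayS_le _ f (fun r => phi_mem_awayS ψ (φ f) (φ r)) (inv_mem_awayS ψ (φ f))

/-- Lemma 5.3 of the paper.  Irredundance of a hidden prime divisor in
`V 1 ∩ ⋯ ∩ V n ∩ D_f` is equivalent to irredundance of its extension in
`V' 1 ∩ ⋯ ∩ V' n ∩ D̂_f`.  Here the quotient field `F` of `D` is realized inside the quotient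
field `Khat` of the completion as the set of fractions of elements of `D`. -/
theorem statement8 (D : Type*) [CommRing D] [IsDomain D] [IsLocalRing D] [IsNoetherianRing D]
    (hdim : 1 < ringKrullDim D)
    [IsDomain (AdicCompletion (IsLocalRing.maximalIdeal D) D)]
    (Khat : Type*) [Field Khat]
    [Algebra (AdicCompletion (IsLocalRing.maximalIdeal D) D) Khat]
    [IsFractionRing (AdicCompletion (IsLocalRing.maximalIdeal D) D) Khat]
    (f : D) (hf0 : f ≠ 0)
    (n : ℕ) (V V' : Fin n → Subring Khat)
    -- each `V i` is a hidden prime divisor of `D`; it lies in the quotient field `F` of `D`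
    (hmem : ∀ i (r : D), ((algebraMap (AdicCompletion (IsLocalRing.maximalIdeal D) D)
      Khat).comp (algebraMap D (AdicCompletion (IsLocalRing.maximalIdeal D) D))) r ∈ V i)
    (hVF : ∀ i, (V i : Set Khat) ⊆ {x : Khat | ∃ a b : D,
      ((algebraMap (AdicCompletion (IsLocalRing.maximalIdeal D) D) Khat).comp
        (algebraMap D (AdicCompletion (IsLocalRing.maximalIdeal D) D))) b ≠ 0 ∧
      x * ((algebraMap (AdicCompletion (IsLocalRing.maximalIdeal D) D) Khat).comp
        (algebraMap D (AdicCompletion (IsLocalRing.maximalIdeal D) D))) b =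
      ((algebraMap (AdicCompletion (IsLocalRing.maximalIdeal D) D) Khat).comp
        (algebraMap D (AdicCompletion (IsLocalRing.maximalIdeal D) D))) a})
    (hhid : ∀ i, IsHiddenPrimeDivisor
      ((algebraMap (AdicCompletion (IsLocalRing.maximalIdeal D) D) Khat).comp
        (algebraMap D (AdicCompletion (IsLocalRing.maximalIdeal D) D))) (V i) (hmem i))
    -- each `V' i` is a valuation overring of the completion extending `V i`,
    -- i.e. `V' i ∩ F = V i`
    (hmem' : ∀ i (r : AdicCompletion (IsLocalRing.maximalIdeal D) D),
      algebraMap (AdicCompletion (IsLocalRing.maximalIdeal D) D) Khat r ∈ V' i)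
    (hval' : ∀ i, ValuationRing (V' i))
    (hcap : ∀ i, (V' i : Set Khat) ∩ {x : Khat | ∃ a b : D,
      ((algebraMap (AdicCompletion (IsLocalRing.maximalIdeal D) D) Khat).comp
        (algebraMap D (AdicCompletion (IsLocalRing.maximalIdeal D) D))) b ≠ 0 ∧
      x * ((algebraMap (AdicCompletion (IsLocalRing.maximalIdeal D) D) Khat).comp
        (algebraMap D (AdicCompletion (IsLocalRing.maximalIdeal D) D))) b =
      ((algebraMap (AdicCompletion (IsLocalRing.maximalIdeal D) D) Khat).comp
        (algebraMap D (AdicCompletion (IsLocalRing.maximalIdeal D) D))) a} = (V i : Set Khat)) :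
    -- conclusion: `V i` is irredundant in `V 1 ∩ ⋯ ∩ V n ∩ D_f` iff `V' i` is irredundant in
    -- `V' 1 ∩ ⋯ ∩ V' n ∩ D̂_f`
    ∀ i : Fin n,
      (¬ ((⋂ j ∈ ({i}ᶜ : Set (Fin n)), (V j : Set Khat)) ∩
        (awayS ((algebraMap (AdicCompletion (IsLocalRing.maximalIdeal D) D) Khat).comp
          (algebraMap D (AdicCompletion (IsLocalRing.maximalIdeal D) D))) f : Set Khat)
        ⊆ (V i : Set Khat))) ↔
      (¬ ((⋂ j ∈ ({i}ᶜ : Set (Fin n)), (V' j : Set Khat)) ∩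
        (awayS (algebraMap (AdicCompletion (IsLocalRing.maximalIdeal D) D) Khat)
          (algebraMap D (AdicCompletion (IsLocalRing.maximalIdeal D) D) f) : Set Khat)
        ⊆ (V' i : Set Khat))) :=
  statement8_general D Khat f hf0 n V V' hmem hhid hmem' hcap

end ArticleOT
end
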